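/- Cross-monotonicity of the mechanism's cost shares: for a subset W ⊆ U of users, let Δ(W) = max_{i∈F} |{j ∈ W : a_{ij} > 0}|, and for each user j fix nonnegative reals (y'^S_j)_{S⊆F}; define ξ_j(W) = (1/Δ(W)) · Σ_{S⊆F} r_j^S y'^S_j. Then for every J ⊆ W ⊆ U and every j ∈ J with Δ(J) ≥ 1, one has Δ(J) ≤ Δ(W) and consequently ξ_j(W) ≤ ξ_j(J): no user's cost share increases when the served set grows. -/

import Mathlib

open Finset

/-- Residual requirement of user `j` given the set `S` of built facilities. -/
noncomputable def resReq {F U : Type*} [DecidableEq F]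
    (a : F → U → ℝ) (r : U → ℝ) (S : Finset F) (j : U) : ℝ :=
  max (r j - ∑ i ∈ S, a i j) 0

/-- Column sparsity of the instance restricted to the user set `W`. -/
noncomputable def colSparsity {F U : Type*} [Fintype F] [DecidableEq U]
    (a : F → U → ℝ) (W : Finset U) : ℕ :=
  Finset.univ.sup (fun i : F => (W.filter (fun j : U => 0 < a i j)).card)

theorem colSparsity_mono {F U : Type*} [Fintype F] [DecidableEq U]
    (a : F → U → ℝ) {J W : Finset U} (hJW : J ⊆ W) :
    colSparsity a J ≤ colSparsity a W :=
  Finset.sup_mono_fun fun _ _ => card_le_card (filter_subset_filter _ hJW)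

theorem resReq_nonneg {F U : Type*} [DecidableEq F]
    (a : F → U → ℝ) (r : U → ℝ) (S : Finset F) (j : U) : 0 ≤ resReq a r S j :=
  le_max_right _ _

theorem cost_shares_cross_monotone_general
    {F U : Type*} [Fintype F] [DecidableEq F] [DecidableEq U]
    (a : F → U → ℝ) (r : U → ℝ)
    (y' : U → Finset F → ℝ) (hy' : ∀ j S, 0 ≤ y' j S)
    (ξ : U → Finset U → ℝ)
    (hξ : ∀ (j : U) (W : Finset U),
      ξ j W = (1 / (colSparsity a W : ℝ)) * ∑ S : Finset F, resReq a r S j * y' j S) :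
    ∀ (J W : Finset U), J ⊆ W → ∀ j ∈ J, 1 ≤ colSparsity a J →
      colSparsity a J ≤ colSparsity a W ∧ ξ j W ≤ ξ j J := by
  intro J W hJW j _ hJ
  have hmono := colSparsity_mono a hJW
  refine ⟨hmono, ?_⟩
  have hJ_pos : (0 : ℝ) < colSparsity a J := by exact_mod_cast hJ
  have hsum_nonneg : 0 ≤ ∑ S : Finset F, resReq a r S j * y' j S :=
    sum_nonneg fun S _ => mul_nonneg (resReq_nonneg a r S j) (hy' j S)
  rw [hξ, hξ]
  gcongr

/-- Cross-monotonicity of the mechanism's cost shares: enlarging the served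
set does not decrease the column sparsity, hence no user's cost share
increases. -/
theorem cost_shares_cross_monotone
    {F U : Type*} [Fintype F] [DecidableEq F] [Fintype U] [DecidableEq U]
    (a : F → U → ℝ) (r : U → ℝ)
    (y' : U → Finset F → ℝ) (hy' : ∀ j S, 0 ≤ y' j S)
    (ξ : U → Finset U → ℝ)
    (hξ : ∀ (j : U) (W : Finset U),
      ξ j W = (1 / (colSparsity a W : ℝ)) * ∑ S : Finset F, resReq a r S j * y' j S) :
    ∀ (J W : Finset U), J ⊆ W → ∀ j ∈ J, 1 ≤ colSparsity a J →
      colSparsity a J ≤ colSparsity a W ∧ ξ j W ≤ ξ j J :=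
  cost_shares_cross_monotone_general a r y' hy' ξ hξ
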